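/- Let d ≥ 1 and let S be a Seidel matrix of order n ≥ 2 whose smallest eigenvalue λ₀ has multiplicity n − d ≥ 1, and suppose λ₀² ≥ d + 2. Then n ≤ d(λ₀²−1)/(λ₀²−d), with equality if and only if S has exactly two distinct eigenvalues λ₀ (multiplicity n−d) and −λ₀(n−d)/d (multiplicity d). -/

import Mathlib

/-!
The trace identities `tr S = 0` and `tr S² = n(n - 1)` fix the sum `-(n - d)λ₀` and the sum of
squares `n(n - 1) - (n - d)λ₀²` of the `d` eigenvalues different from `λ₀`. The Cauchy–Schwarz
inequality `(∑ μᵢ)² ≤ d ∑ μᵢ²` for these eigenvalues rearranges to `n(λ₀² - d) ≤ d(λ₀² - 1)`, and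
equality holds exactly when they all equal their mean `-λ₀(n - d)/d`.
-/

def IsSeidel {n : ℕ} (S : Matrix (Fin n) (Fin n) ℝ) : Prop :=
  S.IsSymm ∧ (∀ i, S i i = 0) ∧ ∀ i j, i ≠ j → S i j = 1 ∨ S i j = -1

open Finset Matrix

namespace Finset

variable {ι : Type*} (s : Finset ι) (f : ι → ℝ)

theorem card_mul_sum_sq_sub_sq_sum :
    #s * ∑ i ∈ s, f i ^ 2 - (∑ i ∈ s, f i) ^ 2 =
      #s * ∑ i ∈ s, (f i - (∑ j ∈ s, f j) / #s) ^ 2 := by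
  rcases s.eq_empty_or_nonempty with rfl | hs
  · simp
  have hcard : (#s : ℝ) ≠ 0 := by positivity
  simp only [sub_sq, sum_add_distrib, sum_sub_distrib, sum_const, nsmul_eq_mul, ← sum_mul,
    ← mul_sum]
  field_simp
  ring

theorem sq_sum_eq_card_mul_sum_sq_iff :
    (∑ i ∈ s, f i) ^ 2 = #s * ∑ i ∈ s, f i ^ 2 ↔ ∀ i ∈ s, f i = (∑ j ∈ s, f j) / #s := by
  rcases s.eq_empty_or_nonempty with rfl | hs
  · simp
  rw [eq_comm, ← sub_eq_zero, card_mul_sum_sq_sub_sq_sum, mul_eq_zero,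
    or_iff_right (by positivity), sum_eq_zero_iff_of_nonneg fun _ _ => sq_nonneg _]
  simp only [pow_eq_zero_iff two_ne_zero, sub_eq_zero]

theorem sum_filter_ne_eq_sub {α M : Type*} [DecidableEq α] [AddCommGroup M] (x : ι → α) (a : α)
    (g : α → M) :
    ∑ i ∈ s with x i ≠ a, g (x i) = ∑ i ∈ s, g (x i) - #{i ∈ s | x i = a} • g a := by
  have hconst : ∑ i ∈ s with x i = a, g (x i) = ∑ i ∈ s with x i = a, g a :=
    sum_congr rfl fun i hi => by rw [(mem_filter.1 hi).2]
  rw [← sum_filter_add_sum_filter_not s (x · = a), hconst, sum_const, add_sub_cancel_left]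

theorem card_filter_eq_card_filter_iff_of_imp {p q : ι → Prop} [DecidablePred p] [DecidablePred q]
    (hqp : ∀ i ∈ s, q i → p i) :
    #{i ∈ s | q i} = #{i ∈ s | p i} ↔ ∀ i ∈ s, p i → q i := by
  have hsub : {i ∈ s | q i} ⊆ {i ∈ s | p i} := fun i hi => by
    rw [mem_filter] at hi ⊢
    exact ⟨hi.1, hqp i hi.1 hi.2⟩
  calc #{i ∈ s | q i} = #{i ∈ s | p i} ↔ {i ∈ s | q i} = {i ∈ s | p i} :=
        ⟨fun h => eq_of_subset_of_card_le hsub h.ge, congrArg card⟩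
    _ ↔ ∀ i ∈ s, p i → q i := by
      rw [filter_inj']
      exact forall₂_congr fun i hi => ⟨fun h => (h.2 ·), fun h => ⟨hqp i hi, h⟩⟩

section FilterNe

variable [Fintype ι] (x : ι → ℝ) (a : ℝ)

theorem card_filter_ne_add_card_filter_eq :
    #{i | x i ≠ a} + #{i | x i = a} = Fintype.card ι := by
  rw [add_comm]
  exact card_filter_add_card_filter_not _

theorem card_mul_sum_sq_filter_ne_sub_sq_sum (hx : ∑ i, x i = 0) :
    #{i | x i ≠ a} * ∑ i with x i ≠ a, x i ^ 2 - (∑ i with x i ≠ a, x i) ^ 2 =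
      #{i | x i ≠ a} * ∑ i, x i ^ 2 - Fintype.card ι * #{i | x i = a} * a ^ 2 := by
  rw [sum_filter_ne_eq_sub univ x a (· ^ 2), sum_filter_ne_eq_sub univ x a fun t => t, hx,
    ← card_filter_ne_add_card_filter_eq x a, nsmul_eq_mul, nsmul_eq_mul]
  push_cast
  ring

variable {x a} {b : ℝ}

theorem sq_sum_filter_ne_eq_card_mul_sum_sq_iff (hab : a ≠ b)
    (hb : (∑ i with x i ≠ a, x i) / #{i | x i ≠ a} = b) :
    (∑ i with x i ≠ a, x i) ^ 2 = #{i | x i ≠ a} * ∑ i with x i ≠ a, x i ^ 2 ↔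
      #{i | x i = b} = #{i | x i ≠ a} := by
  rw [sq_sum_eq_card_mul_sum_sq_iff, hb, card_filter_eq_card_filter_iff_of_imp _ fun i _ h => h ▸ hab.symm]
  simp

end FilterNe

end Finset

namespace Matrix.IsHermitian

variable {𝕜 n : Type*} [RCLike 𝕜] [Fintype n] [DecidableEq n] {A : Matrix n n 𝕜}

theorem trace_pow_eq_sum_eigenvalues_pow (hA : A.IsHermitian) (k : ℕ) :
    (A ^ k).trace = ∑ i, (hA.eigenvalues i : 𝕜) ^ k := by
  conv_lhs => rw [hA.spectral_theorem, ← map_pow, Unitary.conjStarAlgAut_apply, trace_mul_cycle,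
    Unitary.coe_star_mul_self, one_mul, diagonal_pow, trace_diagonal]
  rfl

end Matrix.IsHermitian

namespace IsSeidel

variable {n : ℕ} {S : Matrix (Fin n) (Fin n) ℝ}

theorem trace_eq_zero (hS : IsSeidel S) : S.trace = 0 := by
  simp [trace, hS.2.1]

theorem mul_self_apply_self (hS : IsSeidel S) (i : Fin n) : (S * S) i i = n - 1 := by
  have hentry : ∀ j, S i j * S j i = if i = j then 0 else 1 := by
    intro j
    split_ifs with h
    · simp [h, hS.2.1]
    · rw [hS.1.apply i j]
      rcases hS.2.2 i j h with h' | h' <;> simp [h']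
  simp [mul_apply, hentry, sum_ite, ← ne_eq, filter_ne, Nat.cast_pred i.pos]

theorem trace_sq (hS : IsSeidel S) : (S ^ 2).trace = n * (n - 1) := by
  simp [sq, trace, hS.mul_self_apply_self]
  ring

theorem sum_eigenvalues (hS : IsSeidel S) (hH : S.IsHermitian) : ∑ i, hH.eigenvalues i = 0 := by
  simpa [hS.trace_eq_zero] using (hH.trace_pow_eq_sum_eigenvalues_pow 1).symm

theorem sum_sq_eigenvalues (hS : IsSeidel S) (hH : S.IsHermitian) :
    ∑ i, hH.eigenvalues i ^ 2 = n * (n - 1) := by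
  simpa [hS.trace_sq] using (hH.trace_pow_eq_sum_eigenvalues_pow 2).symm

theorem sum_eigenvalues_filter_ne (hS : IsSeidel S) (hH : S.IsHermitian) (a : ℝ) :
    ∑ i with hH.eigenvalues i ≠ a, hH.eigenvalues i = -(#{i | hH.eigenvalues i = a} * a) := by
  rw [sum_filter_ne_eq_sub univ _ a fun t => t, hS.sum_eigenvalues hH, nsmul_eq_mul, zero_sub]

theorem card_mul_sum_sq_eigenvalues_filter_ne_sub_sq_sum (hS : IsSeidel S) (hH : S.IsHermitian)
    (a : ℝ) :
    #{i | hH.eigenvalues i ≠ a} * ∑ i with hH.eigenvalues i ≠ a, hH.eigenvalues i ^ 2 -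
        (∑ i with hH.eigenvalues i ≠ a, hH.eigenvalues i) ^ 2 =
      n * (#{i | hH.eigenvalues i ≠ a} * (n - 1) - #{i | hH.eigenvalues i = a} * a ^ 2) := by
  rw [card_mul_sum_sq_filter_ne_sub_sq_sum _ a (hS.sum_eigenvalues hH), hS.sum_sq_eigenvalues hH,
    Fintype.card_fin]
  ring

end IsSeidel

theorem relative_bound_general {n d : ℕ} (hd : 1 ≤ d) (hdn : d ≤ n)
    (S : Matrix (Fin n) (Fin n) ℝ) (hS : IsSeidel S) (hH : S.IsHermitian)
    (lam0 : ℝ)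
    (hmult : (Finset.univ.filter fun i => hH.eigenvalues i = lam0).card = n - d)
    (hl2 : (d : ℝ) + 2 ≤ lam0 ^ 2) :
    (n : ℝ) ≤ (d : ℝ) * (lam0 ^ 2 - 1) / (lam0 ^ 2 - d) ∧
    ((n : ℝ) = (d : ℝ) * (lam0 ^ 2 - 1) / (lam0 ^ 2 - d) ↔
      ((Finset.univ.filter fun i =>
          hH.eigenvalues i = -lam0 * ((n : ℝ) - d) / d).card = d ∧
        lam0 ≠ -lam0 * ((n : ℝ) - d) / d)) := by
  have hd0 : (0 : ℝ) < d := by exact_mod_cast hd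
  have hn0 : (0 : ℝ) < n := by exact_mod_cast hd.trans hdn
  have hgap : 0 < lam0 ^ 2 - d := by linarith
  have hmult' : (#{i | hH.eigenvalues i = lam0} : ℝ) = n - d := by rw [hmult, Nat.cast_sub hdn]
  have hcard : #{i | hH.eigenvalues i ≠ lam0} = d := by
    have := card_filter_ne_add_card_filter_eq hH.eigenvalues lam0
    rw [hmult, Fintype.card_fin] at this
    omega
  have hne : lam0 ≠ -lam0 * ((n : ℝ) - d) / d := by
    intro h
    have hl : lam0 ≠ 0 := by rintro rfl; linarith
    rw [eq_div_iff hd0.ne'] at h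
    exact mul_ne_zero hl hn0.ne' (by linarith)
  have hcs := sq_sum_le_card_mul_sum_sq (s := {i | hH.eigenvalues i ≠ lam0}) (f := hH.eigenvalues)
  have hcs_eq := sq_sum_filter_ne_eq_card_mul_sum_sq_iff hne (by
    rw [hS.sum_eigenvalues_filter_ne hH, hcard, hmult']
    ring)
  have hdefect := hS.card_mul_sum_sq_eigenvalues_filter_ne_sub_sq_sum hH lam0
  rw [hcard] at hcs hcs_eq
  rw [hcard, hmult'] at hdefect
  refine ⟨?_, ?_⟩
  · rw [le_div_iff₀ hgap]
    have := nonneg_of_mul_nonneg_right (hdefect ▸ sub_nonneg.2 hcs) hn0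
    linarith
  · rw [eq_div_iff hgap.ne', and_iff_left hne, ← hcs_eq]
    calc (n : ℝ) * (lam0 ^ 2 - d) = d * (lam0 ^ 2 - 1)
        ↔ n * (d * (n - 1) - (n - d) * lam0 ^ 2) = 0 := by
          rw [mul_eq_zero, or_iff_right hn0.ne']
          constructor <;> intro h <;> linarith
      _ ↔ _ := by rw [← hdefect, sub_eq_zero, eq_comm]

theorem relative_bound {n d : ℕ} (hd : 1 ≤ d) (hn : 2 ≤ n) (hnd : 1 ≤ n - d) (hdn : d ≤ n)
    (S : Matrix (Fin n) (Fin n) ℝ) (hS : IsSeidel S) (hH : S.IsHermitian)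
    (lam0 : ℝ) (hmin : ∀ i, lam0 ≤ hH.eigenvalues i)
    (hmult : (Finset.univ.filter fun i => hH.eigenvalues i = lam0).card = n - d)
    (hl2 : (d : ℝ) + 2 ≤ lam0 ^ 2) :
    (n : ℝ) ≤ (d : ℝ) * (lam0 ^ 2 - 1) / (lam0 ^ 2 - d) ∧
    ((n : ℝ) = (d : ℝ) * (lam0 ^ 2 - 1) / (lam0 ^ 2 - d) ↔
      ((Finset.univ.filter fun i =>
          hH.eigenvalues i = -lam0 * ((n : ℝ) - d) / d).card = d ∧
        lam0 ≠ -lam0 * ((n : ℝ) - d) / d)) :=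
  relative_bound_general hd hdn S hS hH lam0 hmult hl2
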